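/- arXiv:1106.5728 — 5 statements merged into one kernel-verified Lean document; each statement's English description precedes it below -/
import Mathlib

section
/- Let Λ be a finite set, h > 0, p a probability measure on Λ, and let U_h := {x ∈ Λ : p(x) ≥ h} with |U_h| = n. Let W : Λ → [0,∞), and let x_1, x_2, … be an enumeration of Λ such that W(x_1) ≤ W(x_2) ≤ ⋯. Write m := ⌊ h^{-1} · ∑_{x ∉ U_h} p(x) ⌋ (assume ∑_{x∉U_h} p(x) ≥ h and that the points x_{n+1},…,x_{n+m} all lie outside U_h, say by ordering so that U_h = {x_1,…,x_n}). Then ∑_{x ∈ U_h^c} p(x) W(x) ≥ h · ∑_{j=1}^{m} W(x_{n+j}). -/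
/-!
Below the level `h` every point carries mass `p < h`, and the mass outside `U_h` is at least
`m h`. Listing the points outside `U_h` as `y₀, y₁, …` with `W` increasing and putting
`c = W(y_{m-1})`, the difference between the two sides splits as
`∑_{k<m} (p_k - h)(W_k - c) + ∑_{k≥m} p_k (W_k - c) + c (∑_k p_k - m h)`,
and each of the three terms is nonnegative.
-/

open Finset

theorem sum_range_mul_sub_mul_sum_range_eq {R : Type*} [CommRing R] (p w : ℕ → R) (h c : R)
    {m K : ℕ} (hmK : m ≤ K) :
    ∑ k ∈ range K, p k * w k - h * ∑ k ∈ range m, w k =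
      ∑ k ∈ range m, (p k - h) * (w k - c) + ∑ k ∈ Ico m K, p k * (w k - c) +
        c * (∑ k ∈ range K, p k - m * h) := by
  simp only [← sum_range_add_sum_Ico _ hmK, mul_sub, sub_mul, sum_sub_distrib, ← mul_sum,
    ← sum_mul, sum_const, card_range, nsmul_eq_mul]
  ring

theorem mul_sum_range_le_sum_range_mul {p w : ℕ → ℝ} {h : ℝ} {m K : ℕ} (hh : 0 < h)
    (hp0 : ∀ k < K, 0 ≤ p k) (hph : ∀ k < K, p k ≤ h) (hw : MonotoneOn w (Set.Iio K))
    (hw0 : ∀ k < K, 0 ≤ w k) (hmass : m * h ≤ ∑ k ∈ range K, p k) :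
    h * ∑ k ∈ range m, w k ≤ ∑ k ∈ range K, p k * w k := by
  have hmK : m ≤ K := by
    have hsum_le : ∑ k ∈ range K, p k ≤ K * h := by
      simpa using sum_le_card_nsmul (range K) p h fun k hk => hph k (mem_range.1 hk)
    exact_mod_cast le_of_mul_le_mul_right (hmass.trans hsum_le) hh
  rcases Nat.eq_zero_or_pos m with rfl | hm
  · simpa using sum_nonneg fun k hk => mul_nonneg (hp0 k (mem_range.1 hk)) (hw0 k (mem_range.1 hk))
  rw [← sub_nonneg, sum_range_mul_sub_mul_sum_range_eq p w h (w (m - 1)) hmK]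
  refine add_nonneg (add_nonneg (sum_nonneg fun k hk => ?_) (sum_nonneg fun k hk => ?_))
    (mul_nonneg (hw0 _ (by omega)) (sub_nonneg.2 hmass))
  · have hkm := mem_range.1 hk
    exact mul_nonneg_of_nonpos_of_nonpos (sub_nonpos.2 (hph k (by omega)))
      (sub_nonpos.2 (hw (Set.mem_Iio.2 (by omega)) (Set.mem_Iio.2 (by omega)) (by omega)))
  · obtain ⟨hmk, hkK⟩ := mem_Ico.1 hk
    exact mul_nonneg (hp0 k hkK) (sub_nonneg.2 (hw (Set.mem_Iio.2 (by omega)) hkK (by omega)))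

theorem Finset.image_range_card_eq {α : Type*} [DecidableEq α] {s : Finset α} {x : ℕ → α}
    (hx : ∀ j < s.card, x j ∈ s) (hinj : Set.InjOn x (Set.Iio s.card)) :
    (range s.card).image x = s := by
  refine eq_of_subset_of_card_le (fun y hy => ?_) ?_
  · obtain ⟨j, hj, rfl⟩ := mem_image.1 hy
    exact hx j (mem_range.1 hj)
  · rw [card_image_of_injOn (by simpa [Set.InjOn] using hinj), card_range]

theorem Finset.sum_sdiff_eq_sum_Ico {α M : Type*} [DecidableEq α] [AddCommMonoid M]
    {s t : Finset α} {x : ℕ → α} {n : ℕ} (hx : ∀ j < s.card, x j ∈ s)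
    (hinj : Set.InjOn x (Set.Iio s.card)) (hord : ∀ j < s.card, (x j ∈ t ↔ j < n)) (f : α → M) :
    ∑ y ∈ s \ t, f y = ∑ k ∈ Ico n s.card, f (x k) := by
  have himage : s \ t = (Ico n s.card).image x := by
    ext y
    constructor
    · intro hy
      obtain ⟨hys, hyt⟩ := mem_sdiff.1 hy
      rw [← image_range_card_eq hx hinj] at hys
      obtain ⟨j, hj, rfl⟩ := mem_image.1 hys
      have hj := mem_range.1 hj
      exact mem_image.2 ⟨j, mem_Ico.2 ⟨not_lt.1 fun hjn => hyt ((hord j hj).2 hjn), hj⟩, rfl⟩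
    · intro hy
      obtain ⟨j, hj, rfl⟩ := mem_image.1 hy
      obtain ⟨hnj, hj⟩ := mem_Ico.1 hj
      exact mem_sdiff.2 ⟨hx j hj, fun hjt => absurd ((hord j hj).1 hjt) (not_lt.2 hnj)⟩
  rw [himage, sum_image fun i hi j hj => hinj (mem_Ico.1 hi).2 (mem_Ico.1 hj).2]

theorem stmt_3_general {α : Type*} [DecidableEq α] (Λ : Finset α) (p W : α → ℝ) (h : ℝ)
    (hh : 0 < h)
    (hW0 : ∀ y ∈ Λ, 0 ≤ W y)
    (hp0 : ∀ y, 0 ≤ p y)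
    (x : ℕ → α)
    (hxmem : ∀ j, j < Λ.card → x j ∈ Λ)
    (hxinj : Set.InjOn x (Set.Iio Λ.card))
    (hxmono : ∀ i j, i ≤ j → j < Λ.card → W (x i) ≤ W (x j))
    (U : Finset α) (hU : U = Λ.filter (fun y => h ≤ p y))
    (n : ℕ)
    (hord : ∀ j, j < Λ.card → (x j ∈ U ↔ j < n))
    (m : ℕ) (hm : m = ⌊h⁻¹ * ∑ y ∈ Λ \ U, p y⌋₊) :
    h * ∑ j ∈ Finset.range m, W (x (n + j)) ≤ ∑ y ∈ Λ \ U, p y * W y := by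
  have hsum (f : α → ℝ) : ∑ y ∈ Λ \ U, f y = ∑ k ∈ range (Λ.card - n), f (x (n + k)) := by
    rw [sum_sdiff_eq_sum_Ico hxmem hxinj hord, sum_Ico_eq_sum_range]
  rw [hsum] at hm ⊢
  refine mul_sum_range_le_sum_range_mul hh (fun k _ => hp0 _) (fun k hk => ?_)
    (fun i hi j hj hij => hxmono _ _ (by omega) (by rw [Set.mem_Iio] at hj; omega))
    (fun k hk => hW0 _ (hxmem _ (by omega))) ?_
  · have hxU : x (n + k) ∉ U := fun hxU => by have := (hord _ (by omega)).1 hxU; omega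
    simp only [hU, mem_filter, not_and, not_le] at hxU
    exact (hxU (hxmem _ (by omega))).le
  · have hm_le := Nat.floor_le (a := h⁻¹ * ∑ k ∈ range (Λ.card - n), p (x (n + k)))
      (mul_nonneg (inv_nonneg.2 hh.le) (sum_nonneg fun k _ => hp0 _))
    rw [← hm, inv_mul_eq_div, le_div_iff₀ hh] at hm_le
    exact hm_le

/-- Lemma 3.9 ('lem227'): if `x` enumerates `Λ` with `W` increasing, the level set
`U = {y ∈ Λ : p y ≥ h}` consists of the first `n` points, and the mass outside `U` is at
least `h`, then `∑_{y ∈ Λ \ U} p y * W y ≥ h * ∑_{j<m} W (x (n+j))`,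
where `m = ⌊h⁻¹ * ∑_{y ∈ Λ \ U} p y⌋`. -/
theorem stmt_3 {α : Type*} [DecidableEq α] (Λ : Finset α) (p W : α → ℝ) (h : ℝ)
    (hh : 0 < h)
    (hW0 : ∀ y ∈ Λ, 0 ≤ W y)
    (hp0 : ∀ y, 0 ≤ p y) (hp1 : ∑ y ∈ Λ, p y = 1)
    (x : ℕ → α)
    (hxmem : ∀ j, j < Λ.card → x j ∈ Λ)
    (hxinj : Set.InjOn x (Set.Iio Λ.card))
    (hxmono : ∀ i j, i ≤ j → j < Λ.card → W (x i) ≤ W (x j))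
    (U : Finset α) (hU : U = Λ.filter (fun y => h ≤ p y))
    (n : ℕ) (hn : n = U.card)
    (hord : ∀ j, j < Λ.card → (x j ∈ U ↔ j < n))
    (hmass : h ≤ ∑ y ∈ Λ \ U, p y)
    (m : ℕ) (hm : m = ⌊h⁻¹ * ∑ y ∈ Λ \ U, p y⌋₊)
    (hnm : n + m ≤ Λ.card) :
    h * ∑ j ∈ Finset.range m, W (x (n + j)) ≤ ∑ y ∈ Λ \ U, p y * W y :=
  stmt_3_general Λ p W h hh hW0 hp0 x hxmem hxinj hxmono U hU n hord m hm
end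

section
/- Let Λ ⊂ ℤ^d be finite, p a probability measure on Λ, h > 0, and U_h := {x : p(x) ≥ h}. Define p_h(x) := (√p(x) − √h)² for x ∈ U_h and p_h(x) := 0 otherwise. Then the Dirichlet energy forms satisfy (√p, −Δ_Λ^D √p) ≥ (√p_h, −Δ_{U_h}^D √p_h), where (f, −Δ_U^D f) = (1/2) ∑_{x,y ∈ U, |x−y|=1} (f(x) − f(y))² + ∑_{x ∈ U} ∑_{y ∉ U, |x−y|=1} f(x)². -/
/-!
On `Λ`, `√p_h = (√p - √h)₊` is a normal contraction of `√p`: it is pointwise dominated by `√p`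
and `|√p_h x - √p_h y| ≤ |√p x - √p y|`, so every term of the Dirichlet form on `Λ` decreases.
Since `√p_h` vanishes off `U_h ⊆ Λ`, its Dirichlet form on `Λ` equals the one on `U_h`.
-/

/-- The lattice neighbor `x ± e_i` of `x ∈ ℤ^d`. -/
def nbr {d : ℕ} (x : Fin d → ℤ) (i : Fin d) (s : Bool) : Fin d → ℤ :=
  Function.update x i (x i + if s then 1 else -1)

/-- The Dirichlet quadratic form of the discrete Laplacian on a finite set `U ⊂ ℤ^d`:
`(f, -Δ_U^D f) = (1/2) ∑_{x,y ∈ U, |x-y|=1} (f x - f y)² + ∑_{x ∈ U} ∑_{y ∉ U, |x-y|=1} (f x)²`. -/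
noncomputable def dEnergy {d : ℕ} (U : Finset (Fin d → ℤ)) (f : (Fin d → ℤ) → ℝ) : ℝ :=
  (1/2) * (∑ x ∈ U, ∑ i : Fin d, ∑ s : Bool,
      if nbr x i s ∈ U then (f x - f (nbr x i s)) ^ 2 else 0)
    + ∑ x ∈ U, ∑ i : Fin d, ∑ s : Bool,
      if nbr x i s ∈ U then 0 else (f x) ^ 2

@[simp]
lemma nbr_nbr_not {d : ℕ} (x : Fin d → ℤ) (i : Fin d) (s : Bool) :
    nbr (nbr x i s) i (!s) = x := by
  cases s <;> simp [nbr]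

@[simp]
lemma nbr_not_nbr {d : ℕ} (x : Fin d → ℤ) (i : Fin d) (s : Bool) :
    nbr (nbr x i (!s)) i s = x := by
  simpa using nbr_nbr_not x i (!s)

lemma sum_nbr_mem_comm {d : ℕ} (A B : Finset (Fin d → ℤ))
    (F : (Fin d → ℤ) → (Fin d → ℤ) → ℝ) :
    ∑ x ∈ A, ∑ i : Fin d, ∑ s : Bool, (if nbr x i s ∈ B then F x (nbr x i s) else 0) =
      ∑ y ∈ B, ∑ i : Fin d, ∑ s : Bool, (if nbr y i s ∈ A then F (nbr y i s) y else 0) := by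
  have hedge : ∀ i s, ∑ x ∈ A, (if nbr x i s ∈ B then F x (nbr x i s) else 0) =
      ∑ y ∈ B, (if nbr y i (!s) ∈ A then F (nbr y i (!s)) y else 0) := by
    intro i s
    rw [← Finset.sum_filter, ← Finset.sum_filter]
    exact Finset.sum_nbij' (nbr · i s) (nbr · i (!s)) (by simp_all) (by simp_all) (by simp)
      (by simp) (by simp)
  rw [Finset.sum_comm, Finset.sum_comm (s := B)]
  refine Finset.sum_congr rfl fun i _ => ?_
  rw [Finset.sum_comm, Finset.sum_comm (s := B)]
  simp only [hedge, Fintype.sum_bool, Bool.not_true, Bool.not_false]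
  ring

lemma dEnergy_eq_sum {d : ℕ} (U : Finset (Fin d → ℤ)) (f : (Fin d → ℤ) → ℝ) :
    dEnergy U f = ∑ x ∈ U, ∑ i : Fin d, ∑ s : Bool,
      if nbr x i s ∈ U then (1/2) * (f x - f (nbr x i s)) ^ 2 else f x ^ 2 := by
  simp only [dEnergy, Finset.mul_sum, ← Finset.sum_add_distrib]
  refine Finset.sum_congr rfl fun x _ => Finset.sum_congr rfl fun i _ =>
    Finset.sum_congr rfl fun s _ => ?_
  split_ifs <;> ring

/-- For `f` vanishing off `U ⊆ Λ`, each edge from `U` into `Λ \ U` contributes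
`(f x)²` to both Dirichlet forms (once as a boundary term of `U`, twice with weight `1/2` in `Λ`). -/
lemma dEnergy_eq_of_subset {d : ℕ} {U Λ : Finset (Fin d → ℤ)} (hUΛ : U ⊆ Λ)
    {f : (Fin d → ℤ) → ℝ} (hf : ∀ x ∉ U, f x = 0) :
    dEnergy U f = dEnergy Λ f := by
  have hout : ∀ x ∈ Λ \ U, (∑ i : Fin d, ∑ s : Bool,
      if nbr x i s ∈ Λ then (1/2) * (f x - f (nbr x i s)) ^ 2 else f x ^ 2) =
      ∑ i : Fin d, ∑ s : Bool, if nbr x i s ∈ U then (1/2) * f (nbr x i s) ^ 2 else 0 := by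
    intro x hx
    rw [hf x (Finset.mem_sdiff.mp hx).2]
    refine Finset.sum_congr rfl fun i _ => Finset.sum_congr rfl fun s _ => ?_
    by_cases hU : nbr x i s ∈ U
    · simp [hU, hUΛ hU]
    · by_cases hΛ : nbr x i s ∈ Λ <;> simp [hU, hΛ, hf _ hU]
  have hin : ∀ x ∈ U, (∑ i : Fin d, ∑ s : Bool,
      if nbr x i s ∈ Λ then (1/2) * (f x - f (nbr x i s)) ^ 2 else f x ^ 2) =
      ∑ i : Fin d, ∑ s : Bool,
        ((if nbr x i s ∈ U then (1/2) * (f x - f (nbr x i s)) ^ 2 else f x ^ 2) -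
          if nbr x i s ∈ Λ \ U then (1/2) * f x ^ 2 else 0) := by
    intro x _
    refine Finset.sum_congr rfl fun i _ => Finset.sum_congr rfl fun s _ => ?_
    by_cases hU : nbr x i s ∈ U
    · simp [hU, hUΛ hU]
    · by_cases hΛ : nbr x i s ∈ Λ
      · simp only [hΛ, hU, hf _ hU, Finset.mem_sdiff, ↓reduceIte, sub_zero, not_false_eq_true,
          and_self]
        ring
      · simp [hU, hΛ]
  rw [dEnergy_eq_sum, dEnergy_eq_sum, ← Finset.sum_sdiff hUΛ, Finset.sum_congr rfl hout,
    Finset.sum_congr rfl hin, ← sum_nbr_mem_comm U (Λ \ U) fun x _ => (1/2) * f x ^ 2]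
  simp only [Finset.sum_sub_distrib]
  ring

lemma dEnergy_le_of_contraction {d : ℕ} {U : Finset (Fin d → ℤ)} {f g : (Fin d → ℤ) → ℝ}
    (hdiff : ∀ x ∈ U, ∀ y ∈ U, |g x - g y| ≤ |f x - f y|) (habs : ∀ x ∈ U, |g x| ≤ |f x|) :
    dEnergy U g ≤ dEnergy U f := by
  simp only [dEnergy_eq_sum]
  refine Finset.sum_le_sum fun x hx => Finset.sum_le_sum fun i _ =>
    Finset.sum_le_sum fun s _ => ?_
  split_ifs with hy
  · gcongr 1/2 * ?_
    exact sq_le_sq.mpr (hdiff x hx _ hy)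
  · exact sq_le_sq.mpr (habs x hx)

theorem stmt_5_general {d : ℕ} (Λ : Finset (Fin d → ℤ)) (p : (Fin d → ℤ) → ℝ) (h : ℝ)
    (U : Finset (Fin d → ℤ)) (hU : U = Λ.filter (fun x => h ≤ p x))
    (ph : (Fin d → ℤ) → ℝ)
    (hph : ∀ x, ph x = if x ∈ U then (Real.sqrt (p x) - Real.sqrt h) ^ 2 else 0) :
    dEnergy U (fun x => Real.sqrt (ph x)) ≤ dEnergy Λ (fun x => Real.sqrt (p x)) := by
  have hUΛ : U ⊆ Λ := hU ▸ Finset.filter_subset _ _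
  have hpos : ∀ x ∈ Λ, Real.sqrt (ph x) = max (Real.sqrt (p x) - Real.sqrt h) 0 := by
    intro x hxΛ
    by_cases hx : h ≤ p x
    · have hxU : x ∈ U := hU ▸ Finset.mem_filter.mpr ⟨hxΛ, hx⟩
      rw [hph, if_pos hxU, Real.sqrt_sq_eq_abs, abs_of_nonneg, max_eq_left] <;>
        linarith [Real.sqrt_le_sqrt hx]
    · have hxU : x ∉ U := by simp [hU, hx]
      rw [hph, if_neg hxU, Real.sqrt_zero, max_eq_right]
      linarith [Real.sqrt_le_sqrt (le_of_not_ge hx)]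
  calc dEnergy U (fun x => Real.sqrt (ph x))
      = dEnergy Λ (fun x => Real.sqrt (ph x)) :=
        dEnergy_eq_of_subset hUΛ fun x hx => by simp [hph, hx]
    _ ≤ dEnergy Λ (fun x => Real.sqrt (p x)) := by
        refine dEnergy_le_of_contraction (fun x hx y hy => ?_) fun x hx => ?_
        · simpa [hpos x hx, hpos y hy] using abs_max_sub_max_le_abs
            (Real.sqrt (p x) - Real.sqrt h) (Real.sqrt (p y) - Real.sqrt h) 0
        · rw [abs_of_nonneg (Real.sqrt_nonneg _), abs_of_nonneg (Real.sqrt_nonneg _), hpos x hx]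
          exact max_le (by linarith [Real.sqrt_nonneg h]) (Real.sqrt_nonneg _)

/-- Lemma 3.10 ('lem226'): for a probability measure `p` on a finite `Λ ⊂ ℤ^d`, `h > 0`,
level set `U_h = {x : p x ≥ h}` and `p_h x = (√(p x) - √h)²` on `U_h` (zero otherwise),
the Dirichlet energies satisfy `(√p, -Δ_Λ^D √p) ≥ (√p_h, -Δ_{U_h}^D √p_h)`. -/
theorem stmt_5 {d : ℕ} (Λ : Finset (Fin d → ℤ)) (p : (Fin d → ℤ) → ℝ) (h : ℝ)
    (hh : 0 < h)
    (hp0 : ∀ x, 0 ≤ p x) (hpsupp : ∀ x ∉ Λ, p x = 0) (hp1 : ∑ x ∈ Λ, p x = 1)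
    (U : Finset (Fin d → ℤ)) (hU : U = Λ.filter (fun x => h ≤ p x))
    (ph : (Fin d → ℤ) → ℝ)
    (hph : ∀ x, ph x = if x ∈ U then (Real.sqrt (p x) - Real.sqrt h) ^ 2 else 0) :
    dEnergy U (fun x => Real.sqrt (ph x)) ≤ dEnergy Λ (fun x => Real.sqrt (p x)) :=
  stmt_5_general Λ p h U hU ph hph
end

section
/- Let Λ ⊂ ℤ^d be a finite box, p a probability measure on Λ with level set U_h(p) = {x : p(x) ≥ h} of cardinality n, and suppose the Dirichlet energy satisfies (√p, −Δ_Λ^D √p) ≤ γ sin²(π/(2ℓ)) for some ℓ ≥ 2 and γ > 0. Assume the Faber–Krahn inequality E₁(−Δ_U^D) ≥ c_FK |U|^{−2/d} for all finite U ⊂ ℤ^d. Then the mass outside the level set satisfies ∑_{x ∉ U_h(p)} p(x) ≥ 1 − ( (γπ²/(4 c_FK))^{1/2} n^{1/d} ℓ^{−1} + (hn)^{1/2} )². -/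
/-!
Truncate `√p` at height `√h`: `g = √p - √h` is nonnegative on `U = U_h(p)` and `√p ≤ √h` on
`Λ \ U`, so every bond of `U` that leaves into `Λ \ U` costs at most the reverse bond of `Λ \ U`.
Hence the Dirichlet energy of `g` on `U` is at most that of `√p` on `Λ`, i.e. at most
`γ sin²(π/2ℓ) ≤ γ (π/2ℓ)²`. Faber–Krahn on `U` turns this into
`‖g‖₂ ≤ (γπ²/(4 c_FK))^{1/2} n^{1/d} / ℓ`, and the triangle inequality
`‖√p‖_{ℓ²(U)} ≤ ‖g‖₂ + ‖√h‖_{ℓ²(U)} = ‖g‖₂ + (hn)^{1/2}` bounds the mass of `p` on `U`.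
-/

lemma sum_sq_add_le_sq_sqrt_add_sqrt {ι : Type*} (s : Finset ι) (f g : ι → ℝ) :
    ∑ i ∈ s, (f i + g i) ^ 2 ≤ (√(∑ i ∈ s, f i ^ 2) + √(∑ i ∈ s, g i ^ 2)) ^ 2 := by
  have hcs := Real.sum_mul_le_sqrt_mul_sqrt s f g
  rw [add_sq, Real.sq_sqrt (by positivity), Real.sq_sqrt (by positivity)]
  simp only [add_sq, Finset.sum_add_distrib, mul_assoc, ← Finset.mul_sum]
  linarith

lemma sum_le_sq_sqrt_sum_sq_sub_sqrt_add {ι : Type*} (s : Finset ι) {p : ι → ℝ}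
    (hp : ∀ x ∈ s, 0 ≤ p x) (h : ℝ) :
    ∑ x ∈ s, p x ≤ (√(∑ x ∈ s, (√(p x) - √h) ^ 2) + √(h * s.card)) ^ 2 := by
  have hconst : √(∑ _x ∈ s, √h ^ 2) = √(h * s.card) := by
    rw [Finset.sum_const, nsmul_eq_mul, Real.sqrt_mul' _ (sq_nonneg _),
      Real.sqrt_sq (Real.sqrt_nonneg h), Real.sqrt_mul' _ (Nat.cast_nonneg _), mul_comm]
  calc ∑ x ∈ s, p x = ∑ x ∈ s, ((√(p x) - √h) + √h) ^ 2 :=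
        Finset.sum_congr rfl fun x hx => by rw [sub_add_cancel, Real.sq_sqrt (hp x hx)]
    _ ≤ _ := hconst ▸ sum_sq_add_le_sq_sqrt_add_sqrt s _ _

lemma sq_sqrt_mul_rpow_div {a ν : ℝ} (ha : 0 ≤ a) (hν : 0 ≤ ν) (t ℓ : ℝ) :
    (√a * ν ^ (1 / t) / ℓ) ^ 2 = a * ν ^ (2 / t) / ℓ ^ 2 := by
  rw [div_pow, mul_pow, Real.sq_sqrt ha, ← Real.rpow_natCast, ← Real.rpow_mul hν, Nat.cast_ofNat,
    one_div_mul_eq_div]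

section Lattice

variable {d : ℕ}

lemma nbr_nbr (x : Fin d → ℤ) (i : Fin d) (s : Bool) : nbr (nbr x i s) i (!s) = x := by
  unfold nbr
  rw [Function.update_idem, Function.update_self]
  cases s <;> simp

lemma nbr_injective (i : Fin d) (s : Bool) : Function.Injective (nbr · i s) :=
  Function.LeftInverse.injective (g := (nbr · i (!s))) fun x => nbr_nbr x i s

noncomputable def bondTerm (W : Finset (Fin d → ℤ)) (f : (Fin d → ℤ) → ℝ) (x : Fin d → ℤ)
    (i : Fin d) (s : Bool) : ℝ :=
  if nbr x i s ∈ W then (f x - f (nbr x i s)) ^ 2 / 2 else f x ^ 2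

lemma bondTerm_nonneg (W : Finset (Fin d → ℤ)) (f : (Fin d → ℤ) → ℝ) (x : Fin d → ℤ)
    (i : Fin d) (s : Bool) : 0 ≤ bondTerm W f x i s := by
  unfold bondTerm; split <;> positivity

lemma dEnergy_eq_sum_bondTerm (W : Finset (Fin d → ℤ)) (f : (Fin d → ℤ) → ℝ) :
    dEnergy W f = ∑ x ∈ W, ∑ i, ∑ s, bondTerm W f x i s := by
  simp only [dEnergy, Finset.mul_sum, ← Finset.sum_add_distrib]
  refine Finset.sum_congr rfl fun x _ => Finset.sum_congr rfl fun i _ =>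
    Finset.sum_congr rfl fun s _ => ?_
  unfold bondTerm
  split <;> ring

lemma sum_ite_nbr_mem_le (U V : Finset (Fin d → ℤ)) (i : Fin d) (s : Bool)
    (φ : (Fin d → ℤ) → ℝ) (hφ : ∀ y, 0 ≤ φ y) :
    ∑ x ∈ U, (if nbr x i s ∈ V then φ (nbr x i s) else 0) ≤ ∑ y ∈ V, φ y := by
  classical
  rw [← Finset.sum_filter, ← Finset.sum_image fun x _ y _ h => nbr_injective i s h]
  refine Finset.sum_le_sum_of_subset_of_nonneg ?_ fun y _ _ => hφ y
  intro y hy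
  obtain ⟨x, hx, rfl⟩ := Finset.mem_image.1 hy
  exact (Finset.mem_filter.1 hx).2

lemma sum_sq_le_of_faberKrahn {W : Finset (Fin d → ℤ)} (hW : W.Nonempty)
    {f : (Fin d → ℤ) → ℝ} {cFK : ℝ} (hcFK : 0 < cFK)
    (hFK : cFK * (W.card : ℝ) ^ (-(2:ℝ)/d) * ∑ x ∈ W, f x ^ 2 ≤ dEnergy W f) :
    ∑ x ∈ W, f x ^ 2 ≤ (W.card : ℝ) ^ ((2:ℝ)/d) / cFK * dEnergy W f := by
  have hpow : 0 < (W.card : ℝ) ^ ((2:ℝ)/d) := Real.rpow_pos_of_pos (by simpa using hW.card_pos) _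
  rw [neg_div, Real.rpow_neg (Nat.cast_nonneg _)] at hFK
  rw [div_mul_eq_mul_div, le_div_iff₀ hcFK]
  calc (∑ x ∈ W, f x ^ 2) * cFK
      = (W.card : ℝ) ^ ((2:ℝ)/d) * (cFK * ((W.card : ℝ) ^ ((2:ℝ)/d))⁻¹ * ∑ x ∈ W, f x ^ 2) := by
        field_simp
    _ ≤ (W.card : ℝ) ^ ((2:ℝ)/d) * dEnergy W f := by gcongr

section Truncation

variable {Λ U : Finset (Fin d → ℤ)} {f : (Fin d → ℤ) → ℝ} {c : ℝ}

/-- A bond of `U` leaving into `Λ \ U` is paid for by the reverse bond of `Λ \ U`. -/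
lemma bondTerm_sub_const_le (hUΛ : U ⊆ Λ) (hc : 0 ≤ c) (hcf : ∀ x ∈ U, c ≤ f x)
    (hfc : ∀ x ∈ Λ \ U, f x ≤ c) {x : Fin d → ℤ} (hx : x ∈ U) (i : Fin d) (s : Bool) :
    bondTerm U (fun z => f z - c) x i s ≤ bondTerm Λ f x i s +
      if nbr x i s ∈ Λ \ U then bondTerm Λ f (nbr x i s) i (!s) else 0 := by
  have hxc := hcf x hx
  unfold bondTerm
  rw [nbr_nbr, if_pos (hUΛ hx)]
  by_cases hyU : nbr x i s ∈ U
  · have hyΛU : nbr x i s ∉ Λ \ U := fun h => (Finset.mem_sdiff.1 h).2 hyU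
    simp only [hyU, hUΛ hyU, hyΛU, if_true, if_false]
    rw [sub_sub_sub_cancel_right, add_zero]
  by_cases hyΛ : nbr x i s ∈ Λ
  · have hyc := hfc _ (Finset.mem_sdiff.2 ⟨hyΛ, hyU⟩)
    simp only [hyU, hyΛ, Finset.mem_sdiff.2 ⟨hyΛ, hyU⟩, if_true, if_false]
    nlinarith
  · have hyΛU : nbr x i s ∉ Λ \ U := fun h => hyΛ (Finset.mem_sdiff.1 h).1
    simp only [hyU, hyΛ, hyΛU, if_false]
    nlinarith

lemma dEnergy_sub_const_le (hUΛ : U ⊆ Λ) (hc : 0 ≤ c) (hcf : ∀ x ∈ U, c ≤ f x)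
    (hfc : ∀ x ∈ Λ \ U, f x ≤ c) :
    dEnergy U (fun z => f z - c) ≤ dEnergy Λ f := by
  have hreturn : ∑ x ∈ U, ∑ i, ∑ s,
      (if nbr x i s ∈ Λ \ U then bondTerm Λ f (nbr x i s) i (!s) else 0)
        ≤ ∑ x ∈ Λ \ U, ∑ i, ∑ s, bondTerm Λ f x i s := by
    rw [Finset.sum_comm, Finset.sum_comm (s := Λ \ U)]
    refine Finset.sum_le_sum fun i _ => ?_
    rw [Finset.sum_comm, Finset.sum_comm (s := Λ \ U)]
    simp only [Fintype.sum_bool, Bool.not_true, Bool.not_false]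
    refine (add_le_add ?_ ?_).trans_eq (add_comm _ _)
    · exact sum_ite_nbr_mem_le _ _ i true _ fun y => bondTerm_nonneg Λ f y i false
    · exact sum_ite_nbr_mem_le _ _ i false _ fun y => bondTerm_nonneg Λ f y i true
  rw [dEnergy_eq_sum_bondTerm, dEnergy_eq_sum_bondTerm, ← Finset.sum_sdiff hUΛ, add_comm]
  calc ∑ x ∈ U, ∑ i, ∑ s, bondTerm U (fun z => f z - c) x i s
      ≤ ∑ x ∈ U, ∑ i, ∑ s, (bondTerm Λ f x i s +
          if nbr x i s ∈ Λ \ U then bondTerm Λ f (nbr x i s) i (!s) else 0) :=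
        Finset.sum_le_sum fun x hx => Finset.sum_le_sum fun i _ => Finset.sum_le_sum fun s _ =>
          bondTerm_sub_const_le hUΛ hc hcf hfc hx i s
    _ ≤ _ := by
        simp only [Finset.sum_add_distrib]
        exact add_le_add_right hreturn _

lemma sum_sq_sub_const_le_of_faberKrahn (hUΛ : U ⊆ Λ) (hc : 0 ≤ c)
    (hcf : ∀ x ∈ U, c ≤ f x) (hfc : ∀ x ∈ Λ \ U, f x ≤ c) (hU : U.Nonempty) {cFK : ℝ}
    (hcFK : 0 < cFK)
    (hFK : cFK * (U.card : ℝ) ^ (-(2:ℝ)/d) * ∑ x ∈ U, (f x - c) ^ 2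
      ≤ dEnergy U (fun z => f z - c)) :
    ∑ x ∈ U, (f x - c) ^ 2 ≤ (U.card : ℝ) ^ ((2:ℝ)/d) / cFK * dEnergy Λ f := by
  refine (sum_sq_le_of_faberKrahn hU hcFK hFK).trans ?_
  gcongr
  exact dEnergy_sub_const_le hUΛ hc hcf hfc

end Truncation

end Lattice

theorem stmt_8_general {d : ℕ} (Λ : Finset (Fin d → ℤ))
    (p : (Fin d → ℤ) → ℝ)
    (hp0 : ∀ x, 0 ≤ p x) (hp1 : ∑ x ∈ Λ, p x = 1)
    (h : ℝ)
    (U : Finset (Fin d → ℤ)) (hU : U = Λ.filter (fun x => h ≤ p x))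
    (n : ℕ) (hn : n = U.card)
    (ℓ : ℕ) (γ cFK : ℝ) (hγ : 0 < γ) (hcFK : 0 < cFK)
    (hFK : ∀ W : Finset (Fin d → ℤ), W.Nonempty → ∀ f : (Fin d → ℤ) → ℝ,
      cFK * (W.card : ℝ) ^ (-(2:ℝ)/d) * ∑ x ∈ W, (f x) ^ 2 ≤ dEnergy W f)
    (hEnergy : dEnergy Λ (fun x => Real.sqrt (p x))
        ≤ γ * Real.sin (Real.pi / (2 * ℓ)) ^ 2) :
    1 - (Real.sqrt (γ * Real.pi ^ 2 / (4 * cFK)) * (n : ℝ) ^ ((1:ℝ)/d) / ℓ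
          + Real.sqrt (h * n)) ^ 2
      ≤ ∑ x ∈ Λ \ U, p x := by
  set A := √(γ * Real.pi ^ 2 / (4 * cFK)) * (n : ℝ) ^ ((1:ℝ)/d) / ℓ
  have hmemU (x) : x ∈ U ↔ x ∈ Λ ∧ h ≤ p x := by rw [hU, Finset.mem_filter]
  have hUΛ : U ⊆ Λ := fun x hx => ((hmemU x).1 hx).1
  have hcf : ∀ x ∈ U, √h ≤ √(p x) := fun x hx => Real.sqrt_le_sqrt ((hmemU x).1 hx).2
  have hfc : ∀ x ∈ Λ \ U, √(p x) ≤ √h := fun x hx => by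
    rw [Finset.mem_sdiff, hmemU, not_and, not_le] at hx
    exact Real.sqrt_le_sqrt (hx.2 hx.1).le
  have hexcess : ∑ x ∈ U, (√(p x) - √h) ^ 2 ≤ A ^ 2 := by
    rcases U.eq_empty_or_nonempty with hUe | hUne
    · rw [hUe, Finset.sum_empty]
      positivity
    calc ∑ x ∈ U, (√(p x) - √h) ^ 2
        ≤ (n : ℝ) ^ ((2:ℝ)/d) / cFK * dEnergy Λ (fun x => √(p x)) := hn ▸
          sum_sq_sub_const_le_of_faberKrahn hUΛ (Real.sqrt_nonneg h) hcf hfc hUne hcFK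
            (hFK U hUne _)
      _ ≤ (n : ℝ) ^ ((2:ℝ)/d) / cFK * (γ * (Real.pi / (2 * ℓ)) ^ 2) := by
          gcongr
          exact hEnergy.trans (mul_le_mul_of_nonneg_left Real.sin_sq_le_sq hγ.le)
      _ = A ^ 2 := by
          rw [sq_sqrt_mul_rpow_div (by positivity) (Nat.cast_nonneg n)]
          ring
  have hmass : ∑ x ∈ U, p x ≤ (A + √(h * n)) ^ 2 := by
    refine (sum_le_sq_sqrt_sum_sq_sub_sqrt_add U (fun x _ => hp0 x) h).trans ?_
    rw [← hn]
    gcongr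
    exact (Real.sqrt_le_left (by positivity)).2 hexcess
  rw [Finset.sum_sdiff_eq_sub hUΛ, hp1]
  linarith

/-- Corollary 3.12 ('peakmasse'): under the Faber–Krahn inequality
`E₁(-Δ_U^D) ≥ c_FK |U|^{-2/d}` (stated variationally), if the Dirichlet energy of `√p`
is at most `γ sin²(π/(2ℓ))` for some `ℓ ≥ 2`, then the mass outside the level set
`U_h(p)` of cardinality `n` satisfies
`∑_{x ∉ U_h(p)} p x ≥ 1 - ((γπ²/(4 c_FK))^{1/2} n^{1/d} ℓ⁻¹ + (hn)^{1/2})²`. -/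
theorem stmt_8 {d : ℕ} (hd : 1 ≤ d) (Λ : Finset (Fin d → ℤ))
    (p : (Fin d → ℤ) → ℝ)
    (hp0 : ∀ x, 0 ≤ p x) (hpsupp : ∀ x ∉ Λ, p x = 0) (hp1 : ∑ x ∈ Λ, p x = 1)
    (h : ℝ) (hh : 0 < h)
    (U : Finset (Fin d → ℤ)) (hU : U = Λ.filter (fun x => h ≤ p x))
    (n : ℕ) (hn : n = U.card)
    (ℓ : ℕ) (hℓ : 2 ≤ ℓ) (γ cFK : ℝ) (hγ : 0 < γ) (hcFK : 0 < cFK)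
    (hFK : ∀ W : Finset (Fin d → ℤ), W.Nonempty → ∀ f : (Fin d → ℤ) → ℝ,
      cFK * (W.card : ℝ) ^ (-(2:ℝ)/d) * ∑ x ∈ W, (f x) ^ 2 ≤ dEnergy W f)
    (hEnergy : dEnergy Λ (fun x => Real.sqrt (p x))
        ≤ γ * Real.sin (Real.pi / (2 * ℓ)) ^ 2) :
    1 - (Real.sqrt (γ * Real.pi ^ 2 / (4 * cFK)) * (n : ℝ) ^ ((1:ℝ)/d) / ℓ
          + Real.sqrt (h * n)) ^ 2
      ≤ ∑ x ∈ Λ \ U, p x :=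
  stmt_8_general Λ p hp0 hp1 h U hU n hn ℓ γ cFK hγ hcFK hFK hEnergy
end

section
/- Let {V(x)}_{x∈Λ} be i.i.d. real random variables on a finite set Λ with G(t) := log E[exp(−tV(0))] < ∞ for t ≥ 0. Fix N ≥ 2 and h ∈ (0, 1/(N−1)). Let x*₁, …, x*_N denote the (random) sites of the N smallest values of V. Then E[ exp( −(1 − h(N−1)) t V(x*₁) − h t ∑_{j=2}^N V(x*_j) ) ] ≤ |Λ| · C(|Λ|, N−1) · exp( G((1 − h(N−1))t) + (N−1) G(ht) ), where C(n,k) is the binomial coefficient. -/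
/-!
Every realisation of the pair (minimising site, next `N - 1` smallest sites) is one of at most
`|Λ| ⬝ C(|Λ|, N-1)` pairs `(x, S)` with `x ∉ S`, so the integrand is dominated by the sum over all
such pairs of `exp(-s₁ V x - s₂ ∑_{y ∈ S} V y)` (`s₁ = (1 - h(N-1)) t`, `s₂ = h t`), forgetting
the ordering constraint. For a fixed pair the sites are distinct, so by independence and
identical distribution each summand has expectation `exp(G s₁) ⬝ exp(G s₂)^(N-1)`.
-/

open MeasureTheory ProbabilityTheory Real Finset

section UnionBound

variable {Ω κ : Type*} [MeasurableSpace Ω] {μ : Measure Ω}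

theorem integral_le_card_mul_of_ae_mem {f : κ → Ω → ℝ} {P : Finset κ} {p : Ω → κ} {E : ℝ}
    (hf_nonneg : ∀ k ∈ P, ∀ ω, 0 ≤ f k ω) (hf_int : ∀ k ∈ P, Integrable (f k) μ)
    (hf_le : ∀ k ∈ P, ∫ ω, f k ω ∂μ ≤ E) (hp : ∀ᵐ ω ∂μ, p ω ∈ P) :
    ∫ ω, f (p ω) ω ∂μ ≤ #P * E :=
  calc ∫ ω, f (p ω) ω ∂μ
      ≤ ∫ ω, ∑ k ∈ P, f k ω ∂μ :=
        integral_mono_of_nonneg (hp.mono fun ω hω => hf_nonneg _ hω ω)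
          (integrable_finsetSum P hf_int)
          (hp.mono fun ω hω => single_le_sum (fun k hk => hf_nonneg k hk ω) hω)
    _ = ∑ k ∈ P, ∫ ω, f k ω ∂μ := integral_finsetSum P hf_int
    _ ≤ #P * E := by simpa using sum_le_card_nsmul P _ E hf_le

end UnionBound

section SitePairs

variable {α : Type*} [DecidableEq α]

def sitePairs (Λ : Finset α) (k : ℕ) : Finset (α × Finset α) :=
  {p ∈ Λ ×ˢ Λ.powersetCard k | p.1 ∉ p.2}

theorem mem_sitePairs {Λ : Finset α} {k : ℕ} {p : α × Finset α} :
    p ∈ sitePairs Λ k ↔ p.1 ∈ Λ ∧ p.2 ⊆ Λ ∧ #p.2 = k ∧ p.1 ∉ p.2 := by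
  simp only [sitePairs, mem_filter, mem_product, mem_powersetCard, and_assoc]

theorem card_sitePairs_le (Λ : Finset α) (k : ℕ) : #(sitePairs Λ k) ≤ #Λ * (#Λ).choose k :=
  calc #(sitePairs Λ k) ≤ #(Λ ×ˢ Λ.powersetCard k) := card_filter_le _ _
    _ = #Λ * (#Λ).choose k := by rw [card_product, card_powersetCard]

end SitePairs

namespace ProbabilityTheory

variable {Ω ι : Type*} [MeasurableSpace Ω] {μ : Measure Ω} {V : ι → Ω → ℝ}

theorem iIndepFun.integral_exp_mul_add_mul_sum (hindep : iIndepFun V μ)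
    (hmeas : ∀ i, Measurable (V i)) {x : ι} {S : Finset ι} (hx : x ∉ S) (a b : ℝ) :
    ∫ ω, exp (a * V x ω + b * ∑ y ∈ S, V y ω) ∂μ = mgf (V x) μ a * ∏ y ∈ S, mgf (V y) μ b := by
  have hxS : IndepFun (V x) (∑ y ∈ S, V y) μ :=
    (hindep.indepFun_finsetSum_of_notMem hmeas hx).symm
  have hprod := (hxS.exp_mul a b).integral_fun_mul_eq_mul_integral (by fun_prop) (by fun_prop)
  simp only [exp_add, ← Finset.sum_apply]
  rw [hprod, ← hindep.mgf_sum hmeas]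
  rfl

theorem iIndepFun.integrable_exp_mul_add_mul_sum [IsFiniteMeasure μ] (hindep : iIndepFun V μ)
    (hmeas : ∀ i, Measurable (V i)) {x : ι} {S : Finset ι} (hx : x ∉ S) {a b : ℝ}
    (hint_x : Integrable (fun ω => exp (a * V x ω)) μ)
    (hint_S : ∀ y ∈ S, Integrable (fun ω => exp (b * V y ω)) μ) :
    Integrable (fun ω => exp (a * V x ω + b * ∑ y ∈ S, V y ω)) μ := by
  have hxS : IndepFun (V x) (∑ y ∈ S, V y) μ :=
    (hindep.indepFun_finsetSum_of_notMem hmeas hx).symm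
  simp only [exp_add, ← Finset.sum_apply]
  exact (hxS.exp_mul a b).integrable_mul hint_x (hindep.integrable_exp_mul_sum hmeas hint_S)

theorem iIndepFun.integral_exp_mul_add_mul_sum_of_identDistrib (hindep : iIndepFun V μ)
    (hmeas : ∀ i, Measurable (V i)) {j : ι} (hident : ∀ i, IdentDistrib (V i) (V j) μ μ)
    {x : ι} {S : Finset ι} (hx : x ∉ S) (a b : ℝ) :
    ∫ ω, exp (a * V x ω + b * ∑ y ∈ S, V y ω) ∂μ = mgf (V j) μ a * mgf (V j) μ b ^ #S := by
  rw [hindep.integral_exp_mul_add_mul_sum hmeas hx, mgf_congr_identDistrib (hident x),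
    prod_congr rfl fun y _ => congrFun (mgf_congr_identDistrib (hident y)) b, prod_const]

end ProbabilityTheory

theorem stmt_10_general {Ω α : Type*} [MeasurableSpace Ω] [DecidableEq α]
    (μ : Measure Ω) [IsProbabilityMeasure μ]
    (V : α → Ω → ℝ) (hVmeas : ∀ x, Measurable (V x))
    (hindep : iIndepFun V μ)
    (hid : ∀ x y : α, Measure.map (V x) μ = Measure.map (V y) μ)
    (Λ : Finset α) (x₀ : α)
    (hInt : ∀ s : ℝ, 0 ≤ s → Integrable (fun ω => Real.exp (-s * V x₀ ω)) μ)
    (G : ℝ → ℝ) (hG : ∀ s : ℝ, G s = Real.log (∫ ω, Real.exp (-s * V x₀ ω) ∂μ))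
    (N : ℕ) (hN : 2 ≤ N) (h t : ℝ) (hh : 0 < h) (hh' : h < 1 / (N - 1 : ℝ)) (ht : 0 ≤ t)
    (X : Ω → α) (W : Ω → Finset α)
    -- `X` is the site of the minimum and `W` the set of the next `N-1` smallest sites
    (hsel : ∀ᵐ ω ∂μ, X ω ∈ Λ ∧ W ω ⊆ Λ.erase (X ω) ∧ (W ω).card = N - 1 ∧
      (∀ y ∈ Λ, V (X ω) ω ≤ V y ω) ∧
      (∀ z ∈ W ω, ∀ y ∈ Λ, y ∉ insert (X ω) (W ω) → V z ω ≤ V y ω)) :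
    (∫ ω, Real.exp (-(1 - h * (N - 1 : ℝ)) * t * V (X ω) ω
          - h * t * ∑ y ∈ W ω, V y ω) ∂μ)
      ≤ (Λ.card : ℝ) * (Λ.card.choose (N - 1) : ℝ) *
          Real.exp (G ((1 - h * (N - 1 : ℝ)) * t) + (N - 1 : ℝ) * G (h * t)) := by
  set s₁ := (1 - h * (N - 1 : ℝ)) * t
  set s₂ := h * t
  have hN1 : ((N - 1 : ℕ) : ℝ) = N - 1 := by rw [Nat.cast_sub (by omega), Nat.cast_one]
  have hs₁ : 0 ≤ s₁ := by
    rw [lt_div_iff₀ (by rw [← hN1]; exact_mod_cast (by omega : 0 < N - 1))] at hh'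
    exact mul_nonneg (by linarith) ht
  have hs₂ : 0 ≤ s₂ := mul_nonneg hh.le ht
  have hident : ∀ y, IdentDistrib (V y) (V x₀) μ μ :=
    fun y => ⟨(hVmeas y).aemeasurable, (hVmeas x₀).aemeasurable, hid y x₀⟩
  have hint : ∀ y, ∀ s, 0 ≤ s → Integrable (fun ω => exp (-s * V y ω)) μ := fun y s hs =>
    ((hident y).comp (measurable_const_mul (-s)).exp).integrable_iff.mpr (hInt s hs)
  have hexpG : ∀ s, 0 ≤ s → exp (G s) = mgf (V x₀) μ (-s) := fun s hs => by
    rw [hG]; exact exp_cgf (hInt s hs)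
  calc _ = ∫ ω, exp (-s₁ * V (X ω) ω + -s₂ * ∑ y ∈ W ω, V y ω) ∂μ := by
        congr! 3 with ω; ring
    _ ≤ #(sitePairs Λ (N - 1)) * exp (G s₁ + (N - 1 : ℝ) * G s₂) := by
        refine integral_le_card_mul_of_ae_mem (p := fun ω => (X ω, W ω))
          (f := fun p ω => exp (-s₁ * V p.1 ω + -s₂ * ∑ y ∈ p.2, V y ω))
          (fun _ _ _ => (exp_pos _).le) (fun p hp => ?_) (fun p hp => le_of_eq ?_) ?_
        · exact hindep.integrable_exp_mul_add_mul_sum hVmeas (mem_sitePairs.mp hp).2.2.2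
            (hint _ s₁ hs₁) fun y _ => hint y s₂ hs₂
        · obtain ⟨-, -, hcard, hx⟩ := mem_sitePairs.mp hp
          rw [hindep.integral_exp_mul_add_mul_sum_of_identDistrib hVmeas hident hx, hcard,
            exp_add, ← hN1, exp_nat_mul, hexpG s₁ hs₁, hexpG s₂ hs₂]
        · filter_upwards [hsel] with ω ⟨hX, hW, hcard, _⟩
          exact mem_sitePairs.mpr ⟨hX, hW.trans (erase_subset _ _), hcard,
            fun hXW => by simpa using hW hXW⟩
    _ ≤ _ := by
        gcongr
        exact_mod_cast card_sitePairs_le Λ (N - 1)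

/-- The union-bound step of Proposition 3.14: for an i.i.d. field `{V x}_{x ∈ Λ}` with
cumulant generating function `G`, if `X ω` is the site of the minimum of `V · ω` on `Λ` and
`W ω` the set of the next `N-1` smallest sites, then for `N ≥ 2`, `h ∈ (0, 1/(N-1))`, `t ≥ 0`,
`E[exp(-(1-h(N-1)) t V(X) - h t ∑_{y ∈ W} V y)]
  ≤ |Λ| ⬝ C(|Λ|, N-1) ⬝ exp(G((1-h(N-1))t) + (N-1) G(ht))`. -/
theorem stmt_10 {Ω α : Type*} [MeasurableSpace Ω] [DecidableEq α] [Fintype α]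
    (μ : Measure Ω) [IsProbabilityMeasure μ]
    (V : α → Ω → ℝ) (hVmeas : ∀ x, Measurable (V x))
    (hindep : iIndepFun V μ)
    (hid : ∀ x y : α, Measure.map (V x) μ = Measure.map (V y) μ)
    (Λ : Finset α) (hΛ : Λ.Nonempty) (x₀ : α) (hx₀ : x₀ ∈ Λ)
    (hInt : ∀ s : ℝ, 0 ≤ s → Integrable (fun ω => Real.exp (-s * V x₀ ω)) μ)
    (G : ℝ → ℝ) (hG : ∀ s : ℝ, G s = Real.log (∫ ω, Real.exp (-s * V x₀ ω) ∂μ))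
    (N : ℕ) (hN : 2 ≤ N) (h t : ℝ) (hh : 0 < h) (hh' : h < 1 / (N - 1 : ℝ)) (ht : 0 ≤ t)
    (X : Ω → α) (W : Ω → Finset α)
    (hXmeas : ∀ x : α, MeasurableSet {ω | X ω = x})
    (hWmeas : ∀ S : Finset α, MeasurableSet {ω | W ω = S})
    -- `X` is the site of the minimum and `W` the set of the next `N-1` smallest sites
    (hsel : ∀ᵐ ω ∂μ, X ω ∈ Λ ∧ W ω ⊆ Λ.erase (X ω) ∧ (W ω).card = N - 1 ∧
      (∀ y ∈ Λ, V (X ω) ω ≤ V y ω) ∧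
      (∀ z ∈ W ω, ∀ y ∈ Λ, y ∉ insert (X ω) (W ω) → V z ω ≤ V y ω)) :
    (∫ ω, Real.exp (-(1 - h * (N - 1 : ℝ)) * t * V (X ω) ω
          - h * t * ∑ y ∈ W ω, V y ω) ∂μ)
      ≤ (Λ.card : ℝ) * (Λ.card.choose (N - 1) : ℝ) *
          Real.exp (G ((1 - h * (N - 1 : ℝ)) * t) + (N - 1 : ℝ) * G (h * t)) :=
  stmt_10_general μ V hVmeas hindep hid Λ x₀ hInt G hG N hN h t hh hh' ht X W hsel
end

section
/- Let Λ ⊂ ℤ^d be a finite box, and let {V(x)}_{x∈Λ} be i.i.d. real random variables with G(t) = log E[exp(−tV(0))] < ∞. Let E₁(H_Λ^D) denote the smallest eigenvalue of H_Λ^D = −Δ_Λ^D + V on ℓ²(Λ). Then for every probability measure p on Λ, E[exp(−t E₁(H_Λ^D))] ≥ exp( −t (√p, −Δ_Λ^D √p) + ∑_{x∈Λ} G(t p(x)) ). -/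
open MeasureTheory ProbabilityTheory

/-- The ground state energy of `H_Λ^D = -Δ_Λ^D + V` on `ℓ²(Λ)`, characterized by the
Rayleigh–Ritz variational principle. -/
noncomputable def groundStateEnergy {d : ℕ} (Λ : Finset (Fin d → ℤ))
    (V : (Fin d → ℤ) → ℝ) : ℝ :=
  sInf {r : ℝ | ∃ f : (Fin d → ℤ) → ℝ, (∀ x ∉ Λ, f x = 0) ∧
    (∑ x ∈ Λ, (f x) ^ 2 = 1) ∧
    r = dEnergy Λ f + ∑ x ∈ Λ, V x * (f x) ^ 2}

/-!
Testing the Rayleigh–Ritz principle with the normalized state `√p` gives, for every realization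
of the potential, `E₁ ≤ (√p, -Δ_Λ^D √p) + ∑ₓ p(x) V(x)`. Exponentiating with the sign `-t ≤ 0`
and taking expectations, independence factorizes `E[∏ₓ exp (-t p(x) V(x))]` into
`∏ₓ exp (G (t p(x)))`. Measurability of `E₁` comes from it being `1`-Lipschitz in the potential
for the sup norm on `Λ`, and integrability of `exp (-t E₁)` from `E₁ ≥ minₓ V(x)`.
-/

open Real Finset

theorem Finset.inf'_le_sum_mul {ι : Type*} {s : Finset ι} (hs : s.Nonempty) (V w : ι → ℝ)
    (hw0 : ∀ i ∈ s, 0 ≤ w i) (hw1 : ∑ i ∈ s, w i = 1) :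
    s.inf' hs V ≤ ∑ i ∈ s, V i * w i :=
  calc s.inf' hs V = ∑ i ∈ s, s.inf' hs V * w i := by rw [← mul_sum, hw1, mul_one]
    _ ≤ ∑ i ∈ s, V i * w i :=
      sum_le_sum fun i hi => mul_le_mul_of_nonneg_right (inf'_le V hi) (hw0 i hi)

theorem Finset.sum_mul_le_sum_mul_add {ι : Type*} {s : Finset ι} {V W w : ι → ℝ} {c : ℝ}
    (hVW : ∀ i ∈ s, V i ≤ W i + c) (hw0 : ∀ i ∈ s, 0 ≤ w i) (hw1 : ∑ i ∈ s, w i = 1) :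
    ∑ i ∈ s, V i * w i ≤ ∑ i ∈ s, W i * w i + c :=
  calc ∑ i ∈ s, V i * w i ≤ ∑ i ∈ s, (W i + c) * w i :=
        sum_le_sum fun i hi => mul_le_mul_of_nonneg_right (hVW i hi) (hw0 i hi)
    _ = ∑ i ∈ s, W i * w i + c := by simp only [add_mul, sum_add_distrib, ← mul_sum, hw1, mul_one]

theorem ProbabilityTheory.iIndepFun.integral_exp_sum_mul {Ω ι : Type*} [MeasurableSpace Ω]
    {μ : Measure Ω} {X : ι → Ω → ℝ} (hX : iIndepFun X μ) (hXm : ∀ i, Measurable (X i))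
    (s : Finset ι) (c : ι → ℝ) :
    ∫ ω, exp (∑ i ∈ s, c i * X i ω) ∂μ = ∏ i ∈ s, mgf (X i) μ (c i) := by
  have h := (hX.comp (fun i r => c i * r) fun i => measurable_const_mul (c i)).mgf_sum
    (fun i => (hXm i).const_mul (c i)) s (t := 1)
  simp only [Function.comp_def, mgf_const_mul, mul_one] at h
  rw [← h, mgf]
  simp only [one_mul, Finset.sum_apply]

section Variational

variable {d : ℕ} {Λ : Finset (Fin d → ℤ)}

theorem dEnergy_nonneg (U : Finset (Fin d → ℤ)) (f : (Fin d → ℤ) → ℝ) : 0 ≤ dEnergy U f := by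
  unfold dEnergy
  refine add_nonneg (mul_nonneg (by norm_num) ?_) ?_ <;>
    exact sum_nonneg fun _ _ => sum_nonneg fun _ _ => sum_nonneg fun _ _ => by
      split_ifs <;> positivity

-- `groundStateEnergy Λ V` unfolds to `sInf (variationalValues Λ V)`.
def variationalValues (Λ : Finset (Fin d → ℤ)) (V : (Fin d → ℤ) → ℝ) : Set ℝ :=
  {r : ℝ | ∃ f : (Fin d → ℤ) → ℝ, (∀ x ∉ Λ, f x = 0) ∧
    (∑ x ∈ Λ, (f x) ^ 2 = 1) ∧
    r = dEnergy Λ f + ∑ x ∈ Λ, V x * (f x) ^ 2}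

theorem inf'_le_energy (hΛ : Λ.Nonempty) (V : (Fin d → ℤ) → ℝ) {f : (Fin d → ℤ) → ℝ}
    (hf1 : ∑ x ∈ Λ, (f x) ^ 2 = 1) :
    Λ.inf' hΛ V ≤ dEnergy Λ f + ∑ x ∈ Λ, V x * (f x) ^ 2 :=
  (Λ.inf'_le_sum_mul hΛ V _ (fun x _ => sq_nonneg (f x)) hf1).trans
    (le_add_of_nonneg_left (dEnergy_nonneg Λ f))

theorem variationalValues_nonempty (hΛ : Λ.Nonempty) (V : (Fin d → ℤ) → ℝ) :
    (variationalValues Λ V).Nonempty := by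
  obtain ⟨x₀, hx₀⟩ := hΛ
  refine ⟨_, Pi.single x₀ 1, fun x hx => Pi.single_eq_of_ne (ne_of_mem_of_not_mem hx₀ hx).symm _,
    ?_, rfl⟩
  simp [Pi.single_apply, hx₀]

theorem bddBelow_variationalValues (Λ : Finset (Fin d → ℤ)) (V : (Fin d → ℤ) → ℝ) :
    BddBelow (variationalValues Λ V) := by
  rcases Λ.eq_empty_or_nonempty with rfl | hΛ
  · exact ⟨0, by rintro r ⟨f, -, hf1, -⟩; simp at hf1⟩
  · exact ⟨Λ.inf' hΛ V, by rintro r ⟨f, -, hf1, rfl⟩; exact inf'_le_energy hΛ V hf1⟩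

theorem groundStateEnergy_le (V : (Fin d → ℤ) → ℝ) {f : (Fin d → ℤ) → ℝ}
    (hf0 : ∀ x ∉ Λ, f x = 0) (hf1 : ∑ x ∈ Λ, (f x) ^ 2 = 1) :
    groundStateEnergy Λ V ≤ dEnergy Λ f + ∑ x ∈ Λ, V x * (f x) ^ 2 :=
  csInf_le (bddBelow_variationalValues Λ V) ⟨f, hf0, hf1, rfl⟩

theorem groundStateEnergy_le_sqrt (V : (Fin d → ℤ) → ℝ) {p : (Fin d → ℤ) → ℝ}
    (hp0 : ∀ x ∈ Λ, 0 ≤ p x) (hpsupp : ∀ x ∉ Λ, p x = 0) (hp1 : ∑ x ∈ Λ, p x = 1) :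
    groundStateEnergy Λ V ≤ dEnergy Λ (fun x => √(p x)) + ∑ x ∈ Λ, p x * V x := by
  have hsq : ∀ x ∈ Λ, √(p x) ^ 2 = p x := fun x hx => sq_sqrt (hp0 x hx)
  convert groundStateEnergy_le V (f := fun x => √(p x)) (fun x hx => by simp [hpsupp x hx])
    (by rw [sum_congr rfl hsq, hp1]) using 2
  exact sum_congr rfl fun x hx => by rw [hsq x hx, mul_comm]

theorem inf'_le_groundStateEnergy (hΛ : Λ.Nonempty) (V : (Fin d → ℤ) → ℝ) :
    Λ.inf' hΛ V ≤ groundStateEnergy Λ V :=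
  le_csInf (variationalValues_nonempty hΛ V) fun _ ⟨_, _, hf1, hr⟩ =>
    hr ▸ inf'_le_energy hΛ V hf1

theorem groundStateEnergy_le_add (hΛ : Λ.Nonempty) {V W : (Fin d → ℤ) → ℝ} {c : ℝ}
    (hVW : ∀ x ∈ Λ, V x ≤ W x + c) : groundStateEnergy Λ V ≤ groundStateEnergy Λ W + c := by
  rw [← sub_le_iff_le_add]
  refine le_csInf (variationalValues_nonempty hΛ W) ?_
  rintro _ ⟨f, hf0, hf1, rfl⟩
  rw [sub_le_iff_le_add]
  calc groundStateEnergy Λ V ≤ dEnergy Λ f + ∑ x ∈ Λ, V x * (f x) ^ 2 :=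
        groundStateEnergy_le V hf0 hf1
    _ ≤ dEnergy Λ f + (∑ x ∈ Λ, W x * (f x) ^ 2 + c) :=
        (add_le_add_iff_left _).2 (sum_mul_le_sum_mul_add hVW (fun x _ => sq_nonneg (f x)) hf1)
    _ = _ := by ring

theorem groundStateEnergy_congr {V W : (Fin d → ℤ) → ℝ} (h : ∀ x ∈ Λ, V x = W x) :
    groundStateEnergy Λ V = groundStateEnergy Λ W := by
  have hsum : ∀ f : (Fin d → ℤ) → ℝ, ∑ x ∈ Λ, V x * (f x) ^ 2 = ∑ x ∈ Λ, W x * (f x) ^ 2 :=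
    fun f => sum_congr rfl fun x hx => by rw [h x hx]
  simp only [groundStateEnergy, hsum]

theorem lipschitzWith_groundStateEnergy (hΛ : Λ.Nonempty) :
    LipschitzWith 1 fun v : Λ → ℝ =>
      groundStateEnergy Λ fun x => if h : x ∈ Λ then v ⟨x, h⟩ else 0 :=
  LipschitzWith.of_le_add fun v w => groundStateEnergy_le_add hΛ fun x hx => by
    rw [dif_pos hx, dif_pos hx, ← sub_le_iff_le_add']
    exact (le_abs_self _).trans ((Real.dist_eq _ _).symm.trans_le (dist_le_pi_dist v w ⟨x, hx⟩))

variable {Ω : Type*} [MeasurableSpace Ω] {V : (Fin d → ℤ) → Ω → ℝ}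

theorem measurable_groundStateEnergy (hΛ : Λ.Nonempty) (hV : ∀ x, Measurable (V x)) :
    Measurable fun ω => groundStateEnergy Λ fun x => V x ω := by
  have hrestrict : (fun ω => groundStateEnergy Λ fun x => V x ω) =
      (fun v : Λ → ℝ => groundStateEnergy Λ fun x => if h : x ∈ Λ then v ⟨x, h⟩ else 0) ∘
        fun ω x => V x ω :=
    funext fun ω => groundStateEnergy_congr fun x hx => by simp [hx]
  rw [hrestrict]
  exact (lipschitzWith_groundStateEnergy hΛ).continuous.measurable.comp
    (measurable_pi_lambda _ fun x => hV x)

theorem integrable_exp_neg_mul_groundStateEnergy {μ : Measure Ω} (hΛ : Λ.Nonempty)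
    (hV : ∀ x, Measurable (V x)) {t : ℝ} (ht : 0 ≤ t)
    (hint : ∀ x ∈ Λ, Integrable (fun ω => exp (-t * V x ω)) μ) :
    Integrable (fun ω => exp (-t * groundStateEnergy Λ fun x => V x ω)) μ := by
  refine (integrable_finsetSum Λ hint).mono'
    ((measurable_groundStateEnergy hΛ hV).const_mul (-t)).exp.aestronglyMeasurable
    (ae_of_all _ fun ω => ?_)
  obtain ⟨y, hy, hmin⟩ := Λ.exists_mem_eq_inf' hΛ fun x => V x ω
  have hVy : V y ω ≤ groundStateEnergy Λ fun x => V x ω :=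
    hmin ▸ inf'_le_groundStateEnergy hΛ fun x => V x ω
  rw [norm_of_nonneg (exp_pos _).le]
  calc exp (-t * groundStateEnergy Λ fun x => V x ω) ≤ exp (-t * V y ω) :=
        exp_le_exp.2 (mul_le_mul_of_nonpos_left hVy (neg_nonpos.2 ht))
    _ ≤ ∑ x ∈ Λ, exp (-t * V x ω) :=
        single_le_sum (f := fun x => exp (-t * V x ω)) (fun x _ => (exp_pos _).le) hy

end Variational

theorem stmt_17_general {Ω : Type*} [MeasurableSpace Ω] (μ : Measure Ω) [IsProbabilityMeasure μ]
    {d : ℕ} (Λ : Finset (Fin d → ℤ))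
    (V : (Fin d → ℤ) → Ω → ℝ) (hVmeas : ∀ x, Measurable (V x))
    (hindep : iIndepFun V μ)
    (hid : ∀ x y, Measure.map (V x) μ = Measure.map (V y) μ)
    (x₀ : Fin d → ℤ) (hx₀ : x₀ ∈ Λ)
    (hInt : ∀ s : ℝ, 0 ≤ s → Integrable (fun ω => Real.exp (-s * V x₀ ω)) μ)
    (G : ℝ → ℝ) (hG : ∀ s : ℝ, G s = Real.log (∫ ω, Real.exp (-s * V x₀ ω) ∂μ))
    (t : ℝ) (ht : 0 ≤ t)
    (p : (Fin d → ℤ) → ℝ) (hp0 : ∀ x, 0 ≤ p x) (hpsupp : ∀ x ∉ Λ, p x = 0)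
    (hp1 : ∑ x ∈ Λ, p x = 1) :
    Real.exp (-t * dEnergy Λ (fun x => Real.sqrt (p x)) + ∑ x ∈ Λ, G (t * p x))
      ≤ ∫ ω, Real.exp (-t * groundStateEnergy Λ (fun x => V x ω)) ∂μ := by
  have hΛ : Λ.Nonempty := ⟨x₀, hx₀⟩
  have hident : ∀ x, IdentDistrib (V x) (V x₀) μ μ := fun x =>
    ⟨(hVmeas x).aemeasurable, (hVmeas x₀).aemeasurable, hid x x₀⟩
  have hexpG : ∀ x ∈ Λ, exp (G (t * p x)) = mgf (V x) μ (-(t * p x)) := fun x _ => by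
    rw [hG, mgf_congr_identDistrib (hident x)]
    exact exp_log (mgf_pos (hInt _ (mul_nonneg ht (hp0 x))))
  have hint : ∀ x ∈ Λ, Integrable (fun ω => exp (-t * V x ω)) μ := fun x _ =>
    ((hident x).comp (measurable_const_mul (-t)).exp).integrable_iff.2 (hInt t ht)
  have hRR : ∀ ω, -t * dEnergy Λ (fun x => √(p x)) + ∑ x ∈ Λ, -(t * p x) * V x ω
      ≤ -t * groundStateEnergy Λ fun x => V x ω := fun ω =>
    calc _ = -t * (dEnergy Λ (fun x => √(p x)) + ∑ x ∈ Λ, p x * V x ω) := by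
          simp only [mul_add, mul_sum, neg_mul, mul_assoc]
      _ ≤ _ := mul_le_mul_of_nonpos_left
          (groundStateEnergy_le_sqrt _ (fun x _ => hp0 x) hpsupp hp1) (neg_nonpos.2 ht)
  calc exp (-t * dEnergy Λ (fun x => √(p x)) + ∑ x ∈ Λ, G (t * p x))
      = exp (-t * dEnergy Λ (fun x => √(p x))) * ∏ x ∈ Λ, mgf (V x) μ (-(t * p x)) := by
        rw [exp_add, exp_sum, prod_congr rfl hexpG]
    _ = ∫ ω, exp (-t * dEnergy Λ (fun x => √(p x)) + ∑ x ∈ Λ, -(t * p x) * V x ω) ∂μ := by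
        simp only [exp_add]
        rw [integral_const_mul, hindep.integral_exp_sum_mul hVmeas]
    _ ≤ ∫ ω, exp (-t * groundStateEnergy Λ fun x => V x ω) ∂μ :=
        integral_mono_of_nonneg (ae_of_all _ fun _ => (exp_pos _).le)
          (integrable_exp_neg_mul_groundStateEnergy hΛ hVmeas ht hint)
          (ae_of_all _ fun ω => exp_le_exp.2 (hRR ω))

/-- Lemma 2.2: for an i.i.d. random potential on a finite box `Λ ⊂ ℤ^d` with cumulant
generating function `G`, and any probability measure `p` on `Λ`,
`E[exp(-t E₁(H_Λ^D))] ≥ exp(-t (√p, -Δ_Λ^D √p) + ∑_{x∈Λ} G(t p x))`. -/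
theorem stmt_17 {Ω : Type*} [MeasurableSpace Ω] (μ : Measure Ω) [IsProbabilityMeasure μ]
    {d : ℕ} (hd : 1 ≤ d) (Λ : Finset (Fin d → ℤ)) (hΛ : Λ.Nonempty)
    (V : (Fin d → ℤ) → Ω → ℝ) (hVmeas : ∀ x, Measurable (V x))
    (hindep : iIndepFun V μ)
    (hid : ∀ x y, Measure.map (V x) μ = Measure.map (V y) μ)
    (x₀ : Fin d → ℤ) (hx₀ : x₀ ∈ Λ)
    (hInt : ∀ s : ℝ, 0 ≤ s → Integrable (fun ω => Real.exp (-s * V x₀ ω)) μ)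
    (G : ℝ → ℝ) (hG : ∀ s : ℝ, G s = Real.log (∫ ω, Real.exp (-s * V x₀ ω) ∂μ))
    (t : ℝ) (ht : 0 ≤ t)
    (p : (Fin d → ℤ) → ℝ) (hp0 : ∀ x, 0 ≤ p x) (hpsupp : ∀ x ∉ Λ, p x = 0)
    (hp1 : ∑ x ∈ Λ, p x = 1) :
    Real.exp (-t * dEnergy Λ (fun x => Real.sqrt (p x)) + ∑ x ∈ Λ, G (t * p x))
      ≤ ∫ ω, Real.exp (-t * groundStateEnergy Λ (fun x => V x ω)) ∂μ :=
  stmt_17_general μ Λ V hVmeas hindep hid x₀ hx₀ hInt G hG t ht p hp0 hpsupp hp1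
end
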